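/- (Lemma 6: budget balancedness.) Under the stated bid assumptions, suppose F is convex on (0, x*_N) and c_i/π_i < c_{i−1}/π_{i−1} for every 2 ≤ i ≤ N. Then the generator's expected profit is strictly positive: U*_0 := Σ_{i=1}^N p*_i − Σ_{i=1}^N π_i ∫_0^∞ y*_i(x*;w) f(w) dw > 0; in particular the mechanism is budget balanced in expectation. -/

import Mathlib

open MeasureTheory Finset

noncomputable section

/-- `phi N x j = Σ_{k=j}^N x_k` (with `phi N x (N+1) = 0`). -/
def phi (N : ℕ) (x : ℕ → ℝ) (j : ℕ) : ℝ := ∑ k ∈ Finset.Icc j N, x k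

/-- The optimal shortfall `y*(x;w)`. -/
def ystar (N : ℕ) (x : ℕ → ℝ) (w : ℝ) (i : ℕ) : ℝ :=
  if w < phi N x (i + 1) then x i
  else if w < phi N x i then phi N x i - w
  else 0

/-- `ρ_i = (c_i - c_{i-1})/(π_i - π_{i-1})` for `1 ≤ i ≤ N`, and `ρ_{N+1} = 0`. -/
def rho (N : ℕ) (c π : ℕ → ℝ) (i : ℕ) : ℝ :=
  if i ≤ N then (c i - c (i - 1)) / (π i - π (i - 1)) else 0

/-- The efficient allocation. -/
def xstar (N : ℕ) (c π : ℕ → ℝ) (Finv : ℝ → ℝ) (i : ℕ) : ℝ :=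
  if i = N then Finv (rho N c π N)
  else Finv (rho N c π i) - Finv (rho N c π (i + 1))

/-- `ρ^cvx_i = (c_{i+1} - c_{i-1})/(π_{i+1} - π_{i-1})`. -/
def rhocvx (c π : ℕ → ℝ) (i : ℕ) : ℝ :=
  (c (i + 1) - c (i - 1)) / (π (i + 1) - π (i - 1))

/-- `α_i = (c_{i+1}(π_i − π_{i−1}) + c_{i−1}(π_{i+1} − π_i))/(π_{i+1} − π_{i−1})`. -/
def alphaB (c π : ℕ → ℝ) (i : ℕ) : ℝ :=
  (c (i + 1) * (π i - π (i - 1)) + c (i - 1) * (π (i + 1) - π i))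
    / (π (i + 1) - π (i - 1))

/-- The Myerson payments `p*_i`. -/
def pstar (N : ℕ) (c π : ℕ → ℝ) (Finv G : ℝ → ℝ) (i : ℕ) : ℝ :=
  if i = N then
    c N * xstar N c π Finv N - (π N - π (N - 1)) * G (Finv (rho N c π N))
  else
    c i * xstar N c π Finv i
      + (π (i + 1) - π (i - 1)) * G (Finv (rhocvx c π i))
      - (π (i + 1) - π i) * G (Finv (rho N c π (i + 1)))
      - (π i - π (i - 1)) * G (Finv (rho N c π i))

lemma bb_tele (z : ℕ → ℝ) : ∀ (n j : ℕ), j ≤ n + 1 →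
    ∑ k ∈ Finset.Icc j n, (z k - z (k + 1)) = z j - z (n + 1) := by
  intro n
  induction n with
  | zero =>
    intro j hj
    interval_cases j
    · simp
    · rw [Finset.Icc_eq_empty (by omega)]; simp
  | succ n ih =>
    intro j hj
    by_cases hj' : j ≤ n + 1
    · rw [Finset.sum_Icc_succ_top hj', ih j hj']; ring
    · have : j = n + 2 := by omega
      subst this
      rw [Finset.Icc_eq_empty (by omega)]; simp

lemma bb_integral (f : ℝ → ℝ) (hf_cont : Continuous f) (hf_int : Integrable f)
    (a b : ℝ) (ha : 0 ≤ a) (hab : a ≤ b) :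
    (∫ w in Set.Ioi (0:ℝ), (if w < a then b - a else if w < b then b - w else 0) * f w)
    = (b - a) * (∫ w in Set.Ioc (0:ℝ) a, f w)
      + (b * (∫ w in Set.Ioc a b, f w) - ∫ w in Set.Ioc a b, w * f w) := by
  have hb : (0:ℝ) ≤ b := ha.trans hab
  have e1 : Set.EqOn (fun w => (if w < a then b - a else if w < b then b - w else 0) * f w)
      (fun w => (b - a) * f w) (Set.Ioc 0 a) := by
    intro w hw
    simp only
    rcases lt_or_eq_of_le hw.2 with h | h
    · rw [if_pos h]
    · rw [if_neg (by rw [h]; exact lt_irrefl a)]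
      by_cases h2 : w < b
      · rw [if_pos h2, h]
      · rw [if_neg h2]
        have hba : b = a := le_antisymm (h ▸ not_lt.1 h2) hab
        rw [hba]; ring
  have e2 : Set.EqOn (fun w => (if w < a then b - a else if w < b then b - w else 0) * f w)
      (fun w => (b - w) * f w) (Set.Ioc a b) := by
    intro w hw
    simp only
    rw [if_neg (not_lt.2 hw.1.le)]
    rcases lt_or_eq_of_le hw.2 with h | h
    · rw [if_pos h]
    · rw [if_neg (by rw [h]; exact lt_irrefl b), h]; ring
  have e3 : Set.EqOn (fun w => (if w < a then b - a else if w < b then b - w else 0) * f w)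
      (fun _ => (0:ℝ)) (Set.Ioi b) := by
    intro w hw
    simp only
    rw [if_neg (not_lt.2 (hab.trans hw.le)), if_neg (not_lt.2 hw.le)]
    ring
  have i1 : IntegrableOn (fun w => (if w < a then b - a else if w < b then b - w else 0) * f w)
      (Set.Ioc (0:ℝ) a) := ((hf_int.const_mul (b - a)).integrableOn).congr_fun e1.symm measurableSet_Ioc
  have i2 : IntegrableOn (fun w => (if w < a then b - a else if w < b then b - w else 0) * f w)
      (Set.Ioc a b) :=
    (((continuous_const.sub continuous_id).mul hf_cont).integrableOn_Ioc).congr_fun e2.symm measurableSet_Ioc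
  have i3 : IntegrableOn (fun w => (if w < a then b - a else if w < b then b - w else 0) * f w)
      (Set.Ioi b) := integrableOn_zero.congr_fun e3.symm measurableSet_Ioi
  rw [← Set.Ioc_union_Ioi_eq_Ioi hb,
    setIntegral_union (Set.Ioc_disjoint_Ioi le_rfl) measurableSet_Ioi
      (by rw [← Set.Ioc_union_Ioc_eq_Ioc ha hab]; exact i1.union i2) i3,
    ← Set.Ioc_union_Ioc_eq_Ioc ha hab,
    setIntegral_union (Set.Ioc_disjoint_Ioc_of_le le_rfl) measurableSet_Ioc i1 i2,
    setIntegral_congr_fun measurableSet_Ioc e1,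
    setIntegral_congr_fun measurableSet_Ioc e2,
    setIntegral_congr_fun measurableSet_Ioi e3]
  have h4 : ∫ w in Set.Ioc a b, (b - w) * f w
      = b * (∫ w in Set.Ioc a b, f w) - ∫ w in Set.Ioc a b, w * f w := by
    have hsub : (fun w => (b - w) * f w) = fun w => b * f w - w * f w := by
      funext w; ring
    rw [hsub, integral_sub ((hf_int.restrict).const_mul b)
      ((show Continuous (fun w : ℝ => w * f w) from continuous_id'.mul hf_cont).integrableOn_Ioc), integral_const_mul]
  rw [h4, integral_const_mul]
  simp

lemma bb_alg (cm ci pm pii pp ri rp zi zp gi gp gc : ℝ)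
    (h1 : ci - cm = ri * (pii - pm)) :
    (ci * (zi - zp) + (pp - pm) * gc - (pp - pii) * gp - (pii - pm) * gi)
      - pii * ((zi - zp) * rp + (zi * (ri - rp) - (gi - gp)))
    = ((pp - pm) * gc - (pp - pii) * gp)
      + (((cm - pm * ri) * zi + pm * gi) - ((ci - pii * rp) * zp + pii * gp)) := by
  linear_combination zi * h1

lemma bb_algN (cm ci pm pii ri zi gi : ℝ) (h1 : ci - cm = ri * (pii - pm)) :
    (ci * zi - (pii - pm) * gi) - pii * (zi * ri - gi)
    = (cm - pm * ri) * zi + pm * gi := by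
  linear_combination zi * h1

/-- Lemma 6: budget balancedness — the generator's expected profit
is strictly positive. -/
theorem budget_balanced
    (N : ℕ) (hN : 2 ≤ N) (c π : ℕ → ℝ)
    (hc0 : c 0 = 0) (hπ0 : π 0 = 0)
    (hπ : ∀ j, j < N → π j < π (j + 1))
    (f F Finv G : ℝ → ℝ)
    (hf_cont : Continuous f)
    (hf_zero : ∀ z : ℝ, z ≤ 0 → f z = 0)
    (hf_pos : ∀ z : ℝ, 0 < z → 0 < f z)
    (hf_int : MeasureTheory.Integrable f)
    (hf_tot : (∫ z : ℝ, f z) = 1)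
    (hF : ∀ z : ℝ, F z = ∫ w in Set.Iic z, f w)
    (hG : ∀ z : ℝ, G z = ∫ w in (0:ℝ)..z, w * f w)
    (hFinvF : ∀ z : ℝ, 0 ≤ z → Finv (F z) = z)
    (hFFinv : ∀ r : ℝ, 0 ≤ r → r < 1 → F (Finv r) = r)
    (hFinv_nonneg : ∀ r : ℝ, 0 ≤ r → r < 1 → 0 ≤ Finv r)
    (hρ1 : rho N c π 1 < 1)
    (hρdec : ∀ i, 1 ≤ i → i < N → rho N c π (i + 1) < rho N c π i)
    (hρN : 0 < rho N c π N)
    (hFconv : ConvexOn ℝ (Set.Ioo (0:ℝ) (xstar N c π Finv N)) F)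
    (hratio : ∀ i, 2 ≤ i → i ≤ N → c i / π i < c (i - 1) / π (i - 1)) :
    (∑ i ∈ Finset.Icc 1 N, pstar N c π Finv G i)
        - ∑ i ∈ Finset.Icc 1 N,
            π i * (∫ w in Set.Ioi (0:ℝ), ystar N (xstar N c π Finv) w i * f w)
      > 0 := by
  have hf_nonneg : ∀ w : ℝ, 0 ≤ f w := by
    intro w
    rcases le_or_gt w 0 with h | h
    · rw [hf_zero w h]
    · exact (hf_pos w h).le
  have hF0 : F 0 = 0 := by
    rw [hF 0, setIntegral_congr_fun measurableSet_Iic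
      (fun w hw => hf_zero w hw : Set.EqOn f (fun _ => (0:ℝ)) (Set.Iic 0))]
    simp
  have hFinv0 : Finv 0 = 0 := by
    have h := hFinvF 0 le_rfl
    rwa [hF0] at h
  have hG0 : G 0 = 0 := by rw [hG]; simp
  have hFdiff : ∀ u v : ℝ, u ≤ v → (∫ w in Set.Ioc u v, f w) = F v - F u := by
    intro u v huv
    rw [hF, hF, ← Set.Iic_union_Ioc_eq_Iic huv,
      setIntegral_union (Set.Iic_disjoint_Ioc le_rfl) measurableSet_Ioc
        hf_int.integrableOn hf_int.integrableOn]
    ring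
  have hwf_cont : Continuous (fun w : ℝ => w * f w) := continuous_id'.mul hf_cont
  have hGdiff : ∀ u v : ℝ, u ≤ v → (∫ w in Set.Ioc u v, w * f w) = G v - G u := by
    intro u v huv
    rw [hG, hG, ← intervalIntegral.integral_of_le huv]
    exact (intervalIntegral.integral_interval_sub_left
      (hwf_cont.intervalIntegrable 0 v) (hwf_cont.intervalIntegrable 0 u)).symm
  have hFmono : ∀ u v : ℝ, u ≤ v → F u ≤ F v := by
    intro u v huv
    have h0 : 0 ≤ ∫ w in Set.Ioc u v, f w :=
      setIntegral_nonneg measurableSet_Ioc (fun w _ => hf_nonneg w)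
    have := hFdiff u v huv
    linarith
  have hFinv_mono : ∀ r s : ℝ, 0 ≤ r → s < 1 → r ≤ s → Finv r ≤ Finv s := by
    intro r s hr hs1 hrs
    by_contra hcon
    push_neg at hcon
    have h1 : s ≤ r := by
      have h := hFmono _ _ hcon.le
      rwa [hFFinv s (hr.trans hrs) hs1, hFFinv r hr (lt_of_le_of_lt hrs hs1)] at h
    have hrs' : r = s := le_antisymm hrs h1
    rw [hrs'] at hcon
    exact lt_irrefl _ hcon
  have hGmono : ∀ u v : ℝ, 0 ≤ u → u ≤ v → G u ≤ G v := by
    intro u v hu huv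
    have h0 : 0 ≤ ∫ w in Set.Ioc u v, w * f w :=
      setIntegral_nonneg measurableSet_Ioc
        (fun w hw => mul_nonneg (hu.trans hw.1.le) (hf_nonneg w))
    have := hGdiff u v huv
    linarith
  have hGpos : ∀ t : ℝ, 0 < t → 0 < G t := by
    intro t ht
    rw [hG]
    exact intervalIntegral.intervalIntegral_pos_of_pos_on
      (hwf_cont.intervalIntegrable 0 t)
      (fun w hw => mul_pos hw.1 (hf_pos w hw.1)) ht
  -- rho facts
  have hRNp : rho N c π (N + 1) = 0 := by rw [rho, if_neg (by omega)]
  have hRanti : ∀ i j, 1 ≤ i → i ≤ j → j ≤ N → rho N c π j ≤ rho N c π i := by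
    intro i j hi hij
    induction j with
    | zero => omega
    | succ n ih =>
      intro hjN
      rcases Nat.lt_or_ge i (n + 1) with h | h
      · have hin : i ≤ n := by omega
        exact le_trans (le_of_lt (hρdec n (le_trans hi hin) (by omega))) (ih hin (by omega))
      · have : i = n + 1 := by omega
        rw [this]
  have hRpos : ∀ i, 1 ≤ i → i ≤ N → 0 < rho N c π i :=
    fun i hi hiN => lt_of_lt_of_le hρN (hRanti i N hi hiN le_rfl)
  have hRlt1 : ∀ i, 1 ≤ i → i ≤ N → rho N c π i < 1 :=
    fun i hi hiN => lt_of_le_of_lt (hRanti 1 i le_rfl hi hiN) hρ1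
  have hznn : ∀ j, 1 ≤ j → j ≤ N + 1 → 0 ≤ Finv (rho N c π j) := by
    intro j hj hjN
    rcases Nat.lt_or_ge j (N + 1) with h | h
    · exact hFinv_nonneg _ (hRpos j hj (by omega)).le (hRlt1 j hj (by omega))
    · have : j = N + 1 := by omega
      rw [this, hRNp, hFinv0]
  have hFz : ∀ j, 1 ≤ j → j ≤ N + 1 → F (Finv (rho N c π j)) = rho N c π j := by
    intro j hj hjN
    rcases Nat.lt_or_ge j (N + 1) with h | h
    · exact hFFinv _ (hRpos j hj (by omega)).le (hRlt1 j hj (by omega))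
    · have : j = N + 1 := by omega
      rw [this, hRNp, hFinv0, hF0]
  have hzmono : ∀ j, 1 ≤ j → j ≤ N → Finv (rho N c π (j + 1)) ≤ Finv (rho N c π j) := by
    intro j hj hjN
    rcases Nat.lt_or_ge j N with h | h
    · exact hFinv_mono _ _ (hRpos (j + 1) (by omega) (by omega)).le
        (hRlt1 j hj hjN) (hRanti j (j + 1) hj (by omega) (by omega))
    · have : j = N := by omega
      rw [this, hRNp, hFinv0]
      exact hznn N (by omega) (by omega)
  have hπd : ∀ j, 1 ≤ j → j ≤ N → π (j - 1) < π j := by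
    intro j hj hjN
    have h := hπ (j - 1) (by omega)
    rwa [Nat.sub_add_cancel hj] at h
  have hcrel : ∀ j, 1 ≤ j → j ≤ N → c j - c (j - 1) = rho N c π j * (π j - π (j - 1)) := by
    intro j hj hjN
    have hne : π j - π (j - 1) ≠ 0 := sub_ne_zero.2 (hπd j hj hjN).ne'
    rw [rho, if_pos hjN]
    exact (div_mul_cancel₀ _ hne).symm
  -- x and phi
  have hxk : ∀ k, 1 ≤ k → k ≤ N →
      xstar N c π Finv k = Finv (rho N c π k) - Finv (rho N c π (k + 1)) := by
    intro k hk hkN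
    rw [xstar]
    by_cases h : k = N
    · rw [if_pos h, h, hRNp, hFinv0]
      ring
    · rw [if_neg h]
  have hphi : ∀ j, 1 ≤ j → j ≤ N + 1 →
      phi N (xstar N c π Finv) j = Finv (rho N c π j) := by
    intro j hj hjN
    rw [phi, Finset.sum_congr rfl (fun k hk => by
      have hk' := Finset.mem_Icc.1 hk
      exact hxk k (le_trans hj hk'.1) hk'.2),
      bb_tele (fun m => Finv (rho N c π m)) N j hjN]
    simp [hRNp, hFinv0]
  -- the integral
  have hint : ∀ i, 1 ≤ i → i ≤ N →
      (∫ w in Set.Ioi (0:ℝ), ystar N (xstar N c π Finv) w i * f w)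
      = (Finv (rho N c π i) - Finv (rho N c π (i + 1))) * rho N c π (i + 1)
        + (Finv (rho N c π i) * (rho N c π i - rho N c π (i + 1))
          - (G (Finv (rho N c π i)) - G (Finv (rho N c π (i + 1))))) := by
    intro i hi hiN
    have ha : 0 ≤ Finv (rho N c π (i + 1)) := hznn (i + 1) (by omega) (by omega)
    have hab : Finv (rho N c π (i + 1)) ≤ Finv (rho N c π i) := hzmono i hi hiN
    have heq : Set.EqOn (fun w => ystar N (xstar N c π Finv) w i * f w)
        (fun w => (if w < Finv (rho N c π (i + 1)) then Finv (rho N c π i) - Finv (rho N c π (i + 1))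
          else if w < Finv (rho N c π i) then Finv (rho N c π i) - w else 0) * f w)
        (Set.Ioi (0:ℝ)) := by
      intro w _
      simp only [ystar]
      rw [hphi i hi (by omega), hphi (i + 1) (by omega) (by omega), hxk i hi hiN]
    rw [setIntegral_congr_fun measurableSet_Ioi heq,
      bb_integral f hf_cont hf_int _ _ ha hab,
      hFdiff 0 _ ha, hFdiff _ _ hab, hGdiff _ _ hab, hF0,
      hFz i hi (by omega), hFz (i + 1) (by omega) (by omega)]
    ring
  -- abbreviations
  set B : ℕ → ℝ := fun j =>
    (c (j - 1) - π (j - 1) * rho N c π j) * Finv (rho N c π j)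
      + π (j - 1) * G (Finv (rho N c π j)) with hB
  set t : ℕ → ℝ := fun i =>
    if i = N then 0 else
      (π (i + 1) - π (i - 1)) * G (Finv (rhocvx c π i))
        - (π (i + 1) - π i) * G (Finv (rho N c π (i + 1))) with ht
  have hB1 : B 1 = 0 := by
    simp [hB, hc0, hπ0]
  have hBNp : B (N + 1) = 0 := by
    simp [hB, hRNp, hFinv0, hG0]
  -- per-index identity
  have hmain : ∀ i ∈ Finset.Icc 1 N,
      pstar N c π Finv G i
        - π i * (∫ w in Set.Ioi (0:ℝ), ystar N (xstar N c π Finv) w i * f w)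
      = t i + (B i - B (i + 1)) := by
    intro i hi
    obtain ⟨hi1, hiN⟩ := Finset.mem_Icc.1 hi
    rw [hint i hi1 hiN]
    by_cases h : i = N
    · rw [h]
      have htN : t N = 0 := by simp [ht]
      have hBNN : B N = (c (N - 1) - π (N - 1) * rho N c π N) * Finv (rho N c π N)
          + π (N - 1) * G (Finv (rho N c π N)) := by simp [hB]
      rw [htN, hBNp, hBNN, pstar, if_pos rfl, xstar, if_pos rfl]
      simp only [hRNp, hFinv0, hG0]
      linear_combination Finv (rho N c π N) * hcrel N (by omega) le_rfl
    · have hti : t i = (π (i + 1) - π (i - 1)) * G (Finv (rhocvx c π i))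
          - (π (i + 1) - π i) * G (Finv (rho N c π (i + 1))) := by simp [ht, h]
      have hBi : B i = (c (i - 1) - π (i - 1) * rho N c π i) * Finv (rho N c π i)
          + π (i - 1) * G (Finv (rho N c π i)) := by simp [hB]
      have hBi1 : B (i + 1) = (c i - π i * rho N c π (i + 1)) * Finv (rho N c π (i + 1))
          + π i * G (Finv (rho N c π (i + 1))) := by simp [hB, Nat.add_sub_cancel]
      rw [hti, hBi, hBi1, pstar, if_neg h, hxk i hi1 hiN]
      linear_combination Finv (rho N c π i) * hcrel i hi1 hiN
  rw [← Finset.sum_sub_distrib, Finset.sum_congr rfl hmain, Finset.sum_add_distrib,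
    bb_tele B N 1 (by omega), hB1, hBNp]
  have hpos : ∀ i, 1 ≤ i → i < N → 0 < t i := by
    intro i hi hiN
    rw [ht]
    simp only [if_neg (by omega : ¬ i = N)]
    have hΔp : 0 < π (i + 1) - π i := sub_pos.2 (hπ i hiN)
    have hΔm : 0 < π i - π (i - 1) := sub_pos.2 (hπd i hi hiN.le)
    have hsum : c (i + 1) - c (i - 1)
        = rho N c π (i + 1) * (π (i + 1) - π i) + rho N c π i * (π i - π (i - 1)) := by
      have h1 := hcrel i hi hiN.le
      have h2 := hcrel (i + 1) (by omega) hiN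
      simp only [Nat.add_sub_cancel] at h2
      linarith
    have hRle : rho N c π (i + 1) ≤ rho N c π i :=
      hRanti i (i + 1) hi (by omega) (by omega)
    have hRp1 : 0 < rho N c π (i + 1) := hRpos (i + 1) (by omega) (by omega)
    have hRi1 : rho N c π i < 1 := hRlt1 i hi hiN.le
    have hRp11 : rho N c π (i + 1) < 1 := hRlt1 (i + 1) (by omega) (by omega)
    have hρc_lb : rho N c π (i + 1) ≤ rhocvx c π i := by
      rw [rhocvx, le_div_iff₀ (by linarith : (0:ℝ) < π (i + 1) - π (i - 1)), hsum]
      nlinarith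
    have hρc_ub : rhocvx c π i < 1 := by
      rw [rhocvx, div_lt_one (by linarith : (0:ℝ) < π (i + 1) - π (i - 1)), hsum]
      nlinarith
    have hρc_pos : 0 < rhocvx c π i := by
      rw [rhocvx, hsum]
      have hRpi : 0 < rho N c π i := hRpos i hi hiN.le
      exact div_pos (by nlinarith) (by linarith)
    have hzc_nn : 0 ≤ Finv (rhocvx c π i) := hFinv_nonneg _ hρc_pos.le hρc_ub
    have hzc_pos : 0 < Finv (rhocvx c π i) := by
      rcases eq_or_lt_of_le hzc_nn with hh | hh
      · exfalso
        have h := hFFinv _ hρc_pos.le hρc_ub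
        rw [← hh, hF0] at h
        linarith
      · exact hh
    have hGc_pos : 0 < G (Finv (rhocvx c π i)) := hGpos _ hzc_pos
    have hzp_le : Finv (rho N c π (i + 1)) ≤ Finv (rhocvx c π i) :=
      hFinv_mono _ _ hRp1.le hρc_ub hρc_lb
    have hGle : G (Finv (rho N c π (i + 1))) ≤ G (Finv (rhocvx c π i)) :=
      hGmono _ _ (hznn (i + 1) (by omega) (by omega)) hzp_le
    nlinarith [mul_nonneg hΔp.le (sub_nonneg.2 hGle), mul_pos hΔm hGc_pos]
  have hsumpos : 0 < ∑ i ∈ Finset.Icc 1 N, t i := by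
    apply Finset.sum_pos'
    · intro i hi
      obtain ⟨hi1, hiN⟩ := Finset.mem_Icc.1 hi
      rcases Nat.lt_or_ge i N with h | h
      · exact (hpos i hi1 h).le
      · have : i = N := by omega
        rw [this, ht]
        simp
    · exact ⟨1, Finset.mem_Icc.2 ⟨le_rfl, by omega⟩, hpos 1 le_rfl (by omega)⟩
  linarith
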